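/- Let l ≥ 1 be an integer, a ∈ ℝ, and let J be the l×l Jordan cell matrix with a on the diagonal and 1 on the superdiagonal. Then for every t ∈ (0, e^{−1}] ∪ [e, +∞): t^a ≤ ‖t^J‖ ≤ √l · e · t^a · |log t|^{l−1}, where ‖·‖ is the operator norm induced by the Euclidean norm; moreover the lower bound t^a ≤ ‖t^J‖ holds for every t > 0. -/

import Mathlib

open MeasureTheory ProbabilityTheory Filter Matrix Real

noncomputable section

/-- `t ^ A := exp((log t) • A)` for a real square matrix `A` and `t > 0`. -/
def matPow {d : ℕ} (t : ℝ) (A : Matrix (Fin d) (Fin d) ℝ) : Matrix (Fin d) (Fin d) ℝ :=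
  NormedSpace.exp (Real.log t • A)

/-- The `l × l` Jordan cell matrix with `a` on the diagonal and `1` on the superdiagonal. -/
def jordanCell (l : ℕ) (a : ℝ) : Matrix (Fin l) (Fin l) ℝ :=
  Matrix.of fun i j => if (i : ℕ) = (j : ℕ) then a else if (j : ℕ) = (i : ℕ) + 1 then 1 else 0

/-- The operator norm of a matrix induced by the Euclidean norm on `ℝ^l`. -/
def eucOpNorm {l : ℕ} (A : Matrix (Fin l) (Fin l) ℝ) : ℝ :=
  ‖LinearMap.toContinuousLinearMap (Matrix.toEuclideanLin A)‖

/-!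
Write `J = a + N` with `N` the nilpotent shift (`N ^ l = 0`, `‖N‖ ≤ 1`). Since `a` is central,
`t ^ J = t ^ a • exp (s • N)` with `s = log t`, and `exp (s • N) = ∑_{k < l} s ^ k / k! • N ^ k`.
Each term has norm at most `|s| ^ k / k!`, and for `|s| ≥ 1` these sum to at most
`e · |s| ^ (l - 1)`. For the lower bound, `0` lies in the spectrum of the nilpotent `s • N`, so
`exp 0 = 1` lies in the spectrum of `exp (s • N)`, whose norm is therefore at least `1`.
-/

open Finset Nat

theorem NormedSpace.exp_eq_sum_range_of_pow_eq_zero (𝕂 : Type*) {𝔸 : Type*} [Field 𝕂]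
    [CharZero 𝕂] [Ring 𝔸] [Algebra 𝕂 𝔸] [TopologicalSpace 𝔸] [IsTopologicalRing 𝔸] {x : 𝔸}
    {n : ℕ} (hx : x ^ n = 0) : NormedSpace.exp x = ∑ k ∈ range n, (k !⁻¹ : 𝕂) • x ^ k := by
  rw [NormedSpace.exp_eq_tsum 𝕂]
  refine tsum_eq_sum fun k hk => ?_
  rw [pow_eq_zero_of_le (by simpa using hk) hx, smul_zero]

theorem NormedSpace.exp_algebraMap_add {𝕂 𝔸 : Type*} [RCLike 𝕂] [NormedRing 𝔸]
    [NormedAlgebra 𝕂 𝔸] [CompleteSpace 𝔸] (c : 𝕂) (x : 𝔸) :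
    NormedSpace.exp (algebraMap 𝕂 𝔸 c + x) = NormedSpace.exp c • NormedSpace.exp x := by
  let : NormedAlgebra ℚ 𝔸 := .restrictScalars ℚ 𝕂 𝔸
  rw [NormedSpace.exp_add_of_commute (Algebra.commutes c x), ← NormedSpace.algebraMap_exp_comm,
    Algebra.smul_def]

theorem norm_exp_smul_le_of_pow_eq_zero {𝔸 : Type*} [NormedRing 𝔸] [NormedAlgebra ℝ 𝔸]
    [NormOneClass 𝔸] {x : 𝔸} {n : ℕ} (hx : x ^ n = 0) (hx1 : ‖x‖ ≤ 1) (s : ℝ) :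
    ‖NormedSpace.exp (s • x)‖ ≤ ∑ k ∈ range n, |s| ^ k / k ! := by
  rw [NormedSpace.exp_eq_sum_range_of_pow_eq_zero ℝ (by rw [smul_pow, hx, smul_zero])]
  refine (norm_sum_le _ _).trans (sum_le_sum fun k _ => ?_)
  have hxk : ‖x ^ k‖ ≤ 1 := (norm_pow_le x k).trans (pow_le_one₀ (norm_nonneg x) hx1)
  calc ‖(k !⁻¹ : ℝ) • (s • x) ^ k‖ = |s| ^ k / k ! * ‖x ^ k‖ := by
        rw [smul_pow, smul_smul, norm_smul, Real.norm_eq_abs, abs_mul, abs_inv, abs_pow,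
          Nat.abs_cast, inv_mul_eq_div]
    _ ≤ |s| ^ k / k ! := mul_le_of_le_one_right (by positivity) hxk

theorem one_le_norm_exp_of_isNilpotent {𝔸 : Type*} [NormedRing 𝔸] [NormedAlgebra ℝ 𝔸]
    [NormOneClass 𝔸] [CompleteSpace 𝔸] {x : 𝔸} (hx : IsNilpotent x) :
    1 ≤ ‖NormedSpace.exp x‖ := by
  have : Nontrivial 𝔸 := NormOneClass.nontrivial
  have h0 : (0 : ℝ) ∈ spectrum ℝ x := (spectrum.zero_mem_iff ℝ).mpr hx.not_isUnit
  simpa using spectrum.norm_le_norm_of_mem (spectrum.exp_mem_exp x h0)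

theorem Real.sum_range_pow_div_factorial_le {r : ℝ} (hr : 1 ≤ r) (n : ℕ) :
    ∑ k ∈ range n, r ^ k / k ! ≤ Real.exp 1 * r ^ (n - 1) := by
  calc ∑ k ∈ range n, r ^ k / k ! ≤ ∑ k ∈ range n, r ^ (n - 1) * ((1 : ℝ) ^ k / k !) := by
        refine sum_le_sum fun k hk => ?_
        rw [one_pow, mul_one_div]
        gcongr
        exact Nat.le_sub_one_of_lt (mem_range.mp hk)
    _ = r ^ (n - 1) * ∑ k ∈ range n, (1 : ℝ) ^ k / k ! := (mul_sum ..).symm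
    _ ≤ r ^ (n - 1) * Real.exp 1 := by gcongr; exact Real.sum_le_exp_of_nonneg zero_le_one n
    _ = Real.exp 1 * r ^ (n - 1) := mul_comm ..

theorem Real.one_le_abs_log {t : ℝ} (ht : 0 < t) (h : t ≤ Real.exp (-1) ∨ Real.exp 1 ≤ t) :
    1 ≤ |Real.log t| := by
  rcases h with h | h
  · have := Real.log_le_log ht h
    rw [Real.log_exp] at this
    exact le_abs.mpr (Or.inr (by linarith))
  · have := Real.log_le_log (Real.exp_pos 1) h
    rw [Real.log_exp] at this
    exact le_abs.mpr (Or.inl this)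

-- Cayley–Hamilton, the characteristic polynomial being `∏ i, (X - C (M i i)) = X ^ card n`.
theorem Matrix.IsUpperTriangular.pow_card_eq_zero {n R : Type*} [Fintype n] [LinearOrder n]
    [CommRing R] {M : Matrix n n R} (hM : M.IsUpperTriangular) (hdiag : M.diag = 0) :
    M ^ Fintype.card n = 0 := by
  have h := Matrix.aeval_self_charpoly M
  rw [Matrix.charpoly_of_isUpperTriangular M hM] at h
  simpa [show ∀ i, M i i = 0 from congrFun hdiag] using h

theorem jordanCell_isUpperTriangular (l : ℕ) (a : ℝ) : (jordanCell l a).IsUpperTriangular := by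
  intro i j hij
  have : (j : ℕ) < i := hij
  simp only [jordanCell, Matrix.of_apply]
  rw [if_neg (by omega), if_neg (by omega)]

theorem jordanCell_eq_algebraMap_add (l : ℕ) (a : ℝ) :
    jordanCell l a = algebraMap ℝ _ a + jordanCell l 0 := by
  ext i j
  simp only [jordanCell, Matrix.of_apply, Matrix.add_apply, Matrix.algebraMap_matrix_apply,
    Fin.ext_iff, Algebra.algebraMap_self, RingHom.id_apply]
  split_ifs <;> simp

theorem jordanCell_zero_pow_eq_zero (l : ℕ) : jordanCell l 0 ^ l = 0 := by
  simpa using (jordanCell_isUpperTriangular l 0).pow_card_eq_zero (by ext i; simp [jordanCell])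

theorem jordanCell_zero_apply (l : ℕ) (i j : Fin l) :
    jordanCell l 0 i j = if (j : ℕ) = i + 1 then 1 else 0 := by
  simp only [jordanCell, Matrix.of_apply]
  split_ifs <;> first | rfl | omega

theorem jordanCell_zero_mulVec_castSucc {m : ℕ} (v : Fin (m + 1) → ℝ) (i : Fin m) :
    (jordanCell (m + 1) 0 *ᵥ v) i.castSucc = v i.succ := by
  simp [jordanCell_zero_apply, Matrix.mulVec, dotProduct, ← Fin.val_succ, ← Fin.ext_iff]

theorem jordanCell_zero_mulVec_last {m : ℕ} (v : Fin (m + 1) → ℝ) :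
    (jordanCell (m + 1) 0 *ᵥ v) (Fin.last m) = 0 := by
  simp only [jordanCell_zero_apply, Matrix.mulVec, dotProduct, Fin.val_last]
  exact sum_eq_zero fun j _ => by rw [if_neg (by omega), zero_mul]

open scoped Matrix.Norms.L2Operator

theorem eucOpNorm_eq_norm {l : ℕ} (A : Matrix (Fin l) (Fin l) ℝ) : eucOpNorm A = ‖A‖ := rfl

theorem norm_jordanCell_zero_le_one (l : ℕ) : ‖jordanCell l 0‖ ≤ 1 := by
  rw [Matrix.cstar_norm_def]
  refine ContinuousLinearMap.opNorm_le_bound _ zero_le_one fun x => ?_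
  rw [one_mul]
  refine (sq_le_sq₀ (norm_nonneg _) (norm_nonneg _)).mp ?_
  rw [EuclideanSpace.norm_sq_eq, EuclideanSpace.norm_sq_eq, Matrix.ofLp_toEuclideanCLM]
  cases l with
  | zero => simp
  | succ m =>
    rw [Fin.sum_univ_castSucc, Fin.sum_univ_succ]
    simp only [jordanCell_zero_mulVec_castSucc, jordanCell_zero_mulVec_last, norm_zero]
    rw [zero_pow two_ne_zero, add_zero]
    exact le_add_of_nonneg_left (sq_nonneg _)

theorem matPow_jordanCell (l : ℕ) (a : ℝ) {t : ℝ} (ht : 0 < t) :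
    matPow t (jordanCell l a) = t ^ a • NormedSpace.exp (Real.log t • jordanCell l 0) := by
  rw [matPow, jordanCell_eq_algebraMap_add, smul_add, Algebra.smul_def (Real.log t), ← map_mul,
    NormedSpace.exp_algebraMap_add, ← Real.exp_eq_exp_ℝ, Real.rpow_def_of_pos ht]

/-- For the Jordan cell `J` of size `l ≥ 1` with real eigenvalue `a`:
`t^a ≤ ‖t^J‖` for every `t > 0`, and for `t ∈ (0, e⁻¹] ∪ [e, ∞)` moreover
`‖t^J‖ ≤ √l · e · t^a · |log t|^(l-1)`, `‖·‖` being the operator norm induced by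
the Euclidean norm. -/
theorem eucOpNorm_matPow_jordanCell (l : ℕ) (hl : 1 ≤ l) (a : ℝ) (t : ℝ) (ht : 0 < t) :
    t ^ a ≤ eucOpNorm (matPow t (jordanCell l a)) ∧
    (t ≤ Real.exp (-1) ∨ Real.exp 1 ≤ t →
      eucOpNorm (matPow t (jordanCell l a)) ≤
        Real.sqrt l * Real.exp 1 * t ^ a * |Real.log t| ^ (l - 1)) := by
  have : Nonempty (Fin l) := ⟨⟨0, hl⟩⟩
  have hN := jordanCell_zero_pow_eq_zero l
  have hta : 0 ≤ t ^ a := Real.rpow_nonneg ht.le a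
  rw [eucOpNorm_eq_norm, matPow_jordanCell l a ht, norm_smul, Real.norm_of_nonneg hta]
  refine ⟨le_mul_of_one_le_right hta (one_le_norm_exp_of_isNilpotent
    ⟨l, by rw [smul_pow, hN, smul_zero]⟩), fun ht' => ?_⟩
  have hsqrt : 1 ≤ Real.sqrt l := Real.one_le_sqrt.mpr (by exact_mod_cast hl)
  calc t ^ a * ‖NormedSpace.exp (Real.log t • jordanCell l 0)‖
      ≤ t ^ a * (Real.exp 1 * |Real.log t| ^ (l - 1)) := by
        gcongr
        exact (norm_exp_smul_le_of_pow_eq_zero hN (norm_jordanCell_zero_le_one l) _).trans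
          (Real.sum_range_pow_div_factorial_le (Real.one_le_abs_log ht ht') l)
    _ = Real.exp 1 * t ^ a * |Real.log t| ^ (l - 1) := by ring
    _ ≤ Real.sqrt l * (Real.exp 1 * t ^ a * |Real.log t| ^ (l - 1)) :=
        le_mul_of_one_le_left (by positivity) hsqrt
    _ = Real.sqrt l * Real.exp 1 * t ^ a * |Real.log t| ^ (l - 1) := by ring
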